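/- Let A be a commutative associative ℂ-algebra, D : A → A a derivation, and I : A → ℂ a linear map such that I(D(a)) = 0 for every a ∈ A. Then: (i) the bracket [f,g] = f·D(g) − g·D(f) is bilinear, alternating and satisfies the Jacobi identity, making A into a Lie algebra (the Lie algebra 𝒜_X of vector fields collinear to a fixed divergence-free vector field X, with D = L_X and I the integral against the volume form); (ii) the bilinear map c(f,g) = I( f·D(D(D(g))) ) is a 2-cocycle on this Lie algebra: c(f,g) = −c(g,f) and c([f,g],h) + c([g,h],f) + c([h,f],g) = 0 for all f, g, h ∈ A. (This generalizes the Gelfand–Fuchs cocycle ∫ f·(L_X)³g·ω.) -/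
import Mathlib


noncomputable section

/-- The bracket `[f,g] = f·D(g) − g·D(f)` on a commutative algebra `A` with a
derivation `D` (abstracting the Lie algebra `𝒜_X` of vector fields collinear to a
fixed divergence-free vector field `X`, with `D = L_X`). -/
def collinearBracket {A : Type*} [CommRing A] [Algebra ℂ A]
    (D : Derivation ℂ A A) (f g : A) : A :=
  f * D g - g * D f

/-- The generalized Gelfand–Fuchs cocycle `c(f,g) = I(f·D³g)` (abstracting
`∫_V f·(L_X)³g·ω`). -/
def gfCocycle {A : Type*} [CommRing A] [Algebra ℂ A]
    (D : Derivation ℂ A A) (I : A →ₗ[ℂ] ℂ) (f g : A) : ℂ :=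
  I (f * D (D (D g)))

/-- **The Lie algebra of fields collinear to a divergence-free field and its
Gelfand–Fuchs-type cocycle.** Let `A` be a commutative associative `ℂ`-algebra,
`D : A → A` a derivation and `I : A → ℂ` a linear map annihilating derivatives
(`I(D a) = 0`). Then: (i) `[f,g] = f·D(g) − g·D(f)` is bilinear, alternating and
satisfies the Jacobi identity, making `A` a Lie algebra; (ii) `c(f,g) = I(f·D³g)` is
a 2-cocycle on it: antisymmetric and satisfying the cocycle identity. -/
theorem collinear_fields_lie_algebra_and_cocycle (A : Type*) [CommRing A] [Algebra ℂ A]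
    (D : Derivation ℂ A A) (I : A →ₗ[ℂ] ℂ) (hI : ∀ a : A, I (D a) = 0) :
    (∀ (c : ℂ) (f g h : A),
      collinearBracket D (f + g) h
          = collinearBracket D f h + collinearBracket D g h ∧
        collinearBracket D h (f + g)
          = collinearBracket D h f + collinearBracket D h g ∧
        collinearBracket D (c • f) g = c • collinearBracket D f g ∧
        collinearBracket D f (c • g) = c • collinearBracket D f g) ∧
    (∀ f : A, collinearBracket D f f = 0) ∧
    (∀ f g h : A,
      collinearBracket D (collinearBracket D f g) h
        + collinearBracket D (collinearBracket D g h) f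
        + collinearBracket D (collinearBracket D h f) g = 0) ∧
    (∀ f g : A, gfCocycle D I f g = - gfCocycle D I g f) ∧
    (∀ f g h : A,
      gfCocycle D I (collinearBracket D f g) h
        + gfCocycle D I (collinearBracket D g h) f
        + gfCocycle D I (collinearBracket D h f) g = 0) := by
  refine ⟨?_, ?_, ?_, ?_, ?_⟩
  · intro c f g h
    refine ⟨?_, ?_, ?_, ?_⟩ <;>
      simp only [collinearBracket, map_add, map_smul, Derivation.map_smul, smul_sub, smul_mul_assoc,
        mul_smul_comm] <;> ring
  · intro f
    simp [collinearBracket]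
  · intro f g h
    simp only [collinearBracket, map_sub, Derivation.leibniz, smul_eq_mul]
    ring
  · intro f g
    have h1 : I (f * D (D (D g)) + g * D (D (D f))) = 0 := by
      have h2 : f * D (D (D g)) + g * D (D (D f))
          = D (f * D (D g) - D f * D g + D (D f) * g) := by
        simp only [map_add, map_sub, Derivation.leibniz, smul_eq_mul]
        ring
      rw [h2]; exact hI _
    rw [map_add] at h1
    simp only [gfCocycle]
    linear_combination h1
  · intro f g h
    have hS : (f * D g - g * D f) * D (D (D h)) + (g * D h - h * D g) * D (D (D f))
        + (h * D f - f * D h) * D (D (D g))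
        = D (f * D g * D (D h) - f * D (D g) * D h - D f * g * D (D h)
            + D f * D (D g) * h + D (D f) * g * D h - D (D f) * D g * h) := by
      simp only [map_add, map_sub, Derivation.leibniz, smul_eq_mul]
      ring
    have h0 : I ((f * D g - g * D f) * D (D (D h)) + (g * D h - h * D g) * D (D (D f))
        + (h * D f - f * D h) * D (D (D g))) = 0 := by
      rw [hS]; exact hI _
    simp only [gfCocycle, collinearBracket]
    rw [← map_add, ← map_add]
    exact h0
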